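/- Triangle consistency: let x, y, z in F_q^m be linearly independent and u in F_{q^m}^m have F_q-linearly independent entries. Fix a representation v1 = a1·x + b1·y of <x,y> orthogonal to u (so a1·(u·x) + b1·(u·y) = 0). Let v3 = a1·z - a1·((u·z)/(u·y))·y be the representation of <y,z> induced via vertex y from v1, and let v3' be the representation of <y,z> induced via vertex z from the representation v2 = -b1·((u·z)/(u·x))·x + b1·z of <x,z>. Then v3' = -v3. -/
import Mathlib


open Submodule Module

lemma dot_ne_zero {K L : Type*} [Field K] [Field L] [Algebra K L] {m : ℕ}
    (u : Fin m → L) (hu : LinearIndependent K u) {w : Fin m → K} (hw : w ≠ 0) :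
    (∑ i, u i * algebraMap K L (w i)) ≠ 0 := by
  intro h
  apply hw
  have := (Fintype.linearIndependent_iff.mp hu) w ?_
  · funext i; exact this i
  · rw [← h]
    congr 1
    funext i
    rw [Algebra.smul_def, mul_comm]

/-- triangle consistency: let `x, y, z ∈ F_q^m` be linearly independent
and `u ∈ F_{q^m}^m` have `F_q`-linearly independent entries. Fix a representation
`v₁ = a₁·x + b₁·y` of `⟨x,y⟩` orthogonal to `u`, i.e. `a₁(u·x) + b₁(u·y) = 0`.
Let `v₃ = a₁·z - a₁·((u·z)/(u·y))·y` be the representation of `⟨y,z⟩` induced via the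
vertex `y` from `v₁`, and `v₃' = -b₁·((u·z)/(u·x))·y + b₁·((u·z)/(u·x))·((u·y)/(u·z))·z`
the one induced via the vertex `z` from `v₂ = -b₁·((u·z)/(u·x))·x + b₁·z`.
Then `v₃' = -v₃`. -/
theorem stmt9 {K L : Type*} [Field K] [Field L] [Algebra K L] {m : ℕ}
    (u : Fin m → L) (hu : LinearIndependent K u)
    (x y z : Fin m → K) (hxyz : LinearIndependent K ![x, y, z])
    (a₁ b₁ : L) (ha₁ : a₁ ≠ 0) (hb₁ : b₁ ≠ 0)
    (horth : a₁ * (∑ i, u i * algebraMap K L (x i)) + b₁ * (∑ i, u i * algebraMap K L (y i)) = 0) :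
    (fun j => (-(b₁ * ((∑ i, u i * algebraMap K L (z i)) / (∑ i, u i * algebraMap K L (x i)))))
          * algebraMap K L (y j)
        + b₁ * ((∑ i, u i * algebraMap K L (z i)) / (∑ i, u i * algebraMap K L (x i)))
          * ((∑ i, u i * algebraMap K L (y i)) / (∑ i, u i * algebraMap K L (z i)))
          * algebraMap K L (z j))
    = -(fun j => a₁ * algebraMap K L (z j)
        - a₁ * ((∑ i, u i * algebraMap K L (z i)) / (∑ i, u i * algebraMap K L (y i)))
          * algebraMap K L (y j)) := by
  have hx : x ≠ 0 := by simpa using hxyz.ne_zero 0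
  have hy : y ≠ 0 := by simpa using hxyz.ne_zero 1
  have hz : z ≠ 0 := by simpa using hxyz.ne_zero 2
  have hX := dot_ne_zero u hu hx
  have hY := dot_ne_zero u hu hy
  have hZ := dot_ne_zero u hu hz
  set X := ∑ i, u i * algebraMap K L (x i)
  set Y := ∑ i, u i * algebraMap K L (y i)
  set Z := ∑ i, u i * algebraMap K L (z i)
  have ha : a₁ = -b₁ * Y / X := by
    field_simp
    linear_combination horth
  funext j
  simp only [Pi.neg_apply, ha]
  field_simp
  ring
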